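/- arXiv:1603.07515 — 5 statements merged into one kernel-verified Lean document; each statement's English description precedes it below -/
import Mathlib

section
/- Let V be continuously differentiable, bounded below, and let (x_n) satisfy the discrete gradient scheme x_{n+1} = x_n - τ_n·∇̄V(x_n, x_{n+1}) with 0 < c ≤ τ_n ≤ M < ∞. Then Σ_{k=0}^∞ ‖∇̄V(x_k, x_{k+1})‖² ≤ (V(x_0) - inf_n V(x_n))/c < ∞ and Σ_{k=0}^∞ ‖x_{k+1} - x_k‖² ≤ M(V(x_0) - inf_n V(x_n)) < ∞. -/
open scoped RealInnerProductSpace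

theorem stmt_6 (n : ℕ) (V : EuclideanSpace ℝ (Fin n) → ℝ)
    (hV : ContDiff ℝ 1 V) (hbdd : ∃ C : ℝ, ∀ u, C ≤ V u)
    (DG : EuclideanSpace ℝ (Fin n) × EuclideanSpace ℝ (Fin n) → EuclideanSpace ℝ (Fin n))
    (hDGcont : Continuous DG)
    (hDG1 : ∀ u u', ⟪DG (u, u'), u' - u⟫ = V u' - V u)
    (hDG2 : ∀ u, DG (u, u) = gradient V u)
    (x : ℕ → EuclideanSpace ℝ (Fin n)) (τ : ℕ → ℝ) (c M : ℝ)
    (hc : 0 < c) (hcM : ∀ k, c ≤ τ k ∧ τ k ≤ M)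
    (hstep : ∀ k, x (k + 1) = x k - τ k • DG (x k, x (k + 1))) :
    (Summable fun k => ‖DG (x k, x (k + 1))‖ ^ 2) ∧
    (∑' k, ‖DG (x k, x (k + 1))‖ ^ 2) ≤ (V (x 0) - ⨅ k, V (x k)) / c ∧
    (Summable fun k => ‖x (k + 1) - x k‖ ^ 2) ∧
    (∑' k, ‖x (k + 1) - x k‖ ^ 2) ≤ M * (V (x 0) - ⨅ k, V (x k)) := by
  set a : ℕ → ℝ := fun k => τ k * ‖DG (x k, x (k + 1))‖ ^ 2 with ha
  have hτpos : ∀ k, 0 < τ k := fun k => hc.trans_le (hcM k).1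
  have hM : 0 < M := (hτpos 0).trans_le (hcM 0).2
  have hanonneg : ∀ k, 0 ≤ a k := fun k =>
    mul_nonneg (hτpos k).le (sq_nonneg _)
  have hdec : ∀ k, a k = V (x k) - V (x (k + 1)) := by
    intro k
    have h1 := hDG1 (x k) (x (k + 1))
    have h2 : x (k + 1) - x k = (-τ k) • DG (x k, x (k + 1)) := by
      nth_rewrite 1 [hstep k]; module
    rw [h2, real_inner_smul_right, real_inner_self_eq_norm_sq] at h1
    simp only [ha]
    nlinarith [h1]
  have hsum : ∀ N, ∑ k ∈ Finset.range N, a k = V (x 0) - V (x N) := by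
    intro N
    induction N with
    | zero => simp
    | succ N ih => rw [Finset.sum_range_succ, ih, hdec N]; ring
  have hbb : BddBelow (Set.range fun k => V (x k)) := by
    obtain ⟨C, hC⟩ := hbdd
    exact ⟨C, by rintro y ⟨k, rfl⟩; exact hC _⟩
  have hinf : ∀ N, (⨅ k, V (x k)) ≤ V (x N) := fun N => ciInf_le hbb N
  have hbound : ∀ N, ∑ k ∈ Finset.range N, a k ≤ V (x 0) - ⨅ k, V (x k) := by
    intro N; rw [hsum N]; linarith [hinf N]
  have hsa : Summable a := summable_of_sum_range_le hanonneg hbound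
  have htsum : ∑' k, a k ≤ V (x 0) - ⨅ k, V (x k) :=
    Summable.tsum_le_of_sum_range_le hsa hbound
  -- first part
  have hle1 : ∀ k, ‖DG (x k, x (k + 1))‖ ^ 2 ≤ a k / c := by
    intro k
    rw [le_div_iff₀ hc]
    simp only [ha]
    have := (hcM k).1
    nlinarith [sq_nonneg ‖DG (x k, x (k + 1))‖]
  have hs1 : Summable fun k => ‖DG (x k, x (k + 1))‖ ^ 2 :=
    Summable.of_nonneg_of_le (fun k => sq_nonneg _) hle1 (hsa.div_const c)
  have ht1 : (∑' k, ‖DG (x k, x (k + 1))‖ ^ 2) ≤ (V (x 0) - ⨅ k, V (x k)) / c := by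
    calc (∑' k, ‖DG (x k, x (k + 1))‖ ^ 2) ≤ ∑' k, a k / c :=
          Summable.tsum_le_tsum hle1 hs1 (hsa.div_const c)
      _ = (∑' k, a k) / c := by rw [tsum_div_const]
      _ ≤ (V (x 0) - ⨅ k, V (x k)) / c := by
          gcongr
  -- second part
  have hxk : ∀ k, ‖x (k + 1) - x k‖ ^ 2 = τ k ^ 2 * ‖DG (x k, x (k + 1))‖ ^ 2 := by
    intro k
    have h2 : x (k + 1) - x k = (-τ k) • DG (x k, x (k + 1)) := by
      nth_rewrite 1 [hstep k]; module
    rw [h2, norm_smul]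
    simp [mul_pow, sq_abs]
  have hle2 : ∀ k, ‖x (k + 1) - x k‖ ^ 2 ≤ M * a k := by
    intro k
    rw [hxk k]
    simp only [ha]
    have h1 := (hcM k).2
    have h0 := hτpos k
    nlinarith [mul_nonneg (sub_nonneg.2 h1) (mul_nonneg h0.le (sq_nonneg ‖DG (x k, x (k + 1))‖))]
  have hs2 : Summable fun k => ‖x (k + 1) - x k‖ ^ 2 :=
    Summable.of_nonneg_of_le (fun k => sq_nonneg _) hle2 (hsa.mul_left M)
  refine ⟨hs1, ht1, hs2, ?_⟩
  calc (∑' k, ‖x (k + 1) - x k‖ ^ 2) ≤ ∑' k, M * a k :=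
        Summable.tsum_le_tsum hle2 hs2 (hsa.mul_left M)
    _ = M * ∑' k, a k := tsum_mul_left
    _ ≤ M * (V (x 0) - ⨅ k, V (x k)) := by
        exact mul_le_mul_of_nonneg_left htsum hM.le
end

section
/- Under the discrete gradient scheme x_{n+1} = x_n - τ_n·∇̄V(x_n, x_{n+1}) with 0 < c ≤ τ_n ≤ M and V bounded below, one has lim_{n→∞} (x_{n+1} - x_n) = 0 and lim_{n→∞} ∇̄V(x_n, x_{n+1}) = 0. -/
open scoped RealInnerProductSpace
open Filter

theorem stmt_7 (n : ℕ) (V : EuclideanSpace ℝ (Fin n) → ℝ)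
    (hV : ContDiff ℝ 1 V) (hbdd : ∃ C : ℝ, ∀ u, C ≤ V u)
    (DG : EuclideanSpace ℝ (Fin n) × EuclideanSpace ℝ (Fin n) → EuclideanSpace ℝ (Fin n))
    (hDGcont : Continuous DG)
    (hDG1 : ∀ u u', ⟪DG (u, u'), u' - u⟫ = V u' - V u)
    (hDG2 : ∀ u, DG (u, u) = gradient V u)
    (x : ℕ → EuclideanSpace ℝ (Fin n)) (τ : ℕ → ℝ) (c M : ℝ)
    (hc : 0 < c) (hcM : ∀ k, c ≤ τ k ∧ τ k ≤ M)
    (hstep : ∀ k, x (k + 1) = x k - τ k • DG (x k, x (k + 1))) :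
    Tendsto (fun k => x (k + 1) - x k) atTop (nhds 0) ∧
    Tendsto (fun k => DG (x k, x (k + 1))) atTop (nhds 0) := by
  set d : ℕ → EuclideanSpace ℝ (Fin n) := fun k => DG (x k, x (k + 1)) with hd
  have hτpos : ∀ k, 0 < τ k := fun k => lt_of_lt_of_le hc (hcM k).1
  have hdiff : ∀ k, x (k + 1) - x k = -(τ k • d k) := by
    intro k
    rw [hstep k]
    abel
  have key : ∀ k, V (x (k + 1)) - V (x k) = -(τ k * ‖d k‖ ^ 2) := by
    intro k
    rw [← hDG1 (x k) (x (k + 1)), hdiff k, inner_neg_right, inner_smul_right,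
      real_inner_self_eq_norm_sq]
  set f : ℕ → ℝ := fun k => V (x k) with hf
  have hanti : Antitone f := by
    apply antitone_nat_of_succ_le
    intro k
    have h := key k
    nlinarith [sq_nonneg (‖d k‖), hτpos k]
  obtain ⟨C, hC⟩ := hbdd
  have hbdd' : BddBelow (Set.range f) := ⟨C, by rintro _ ⟨k, rfl⟩; exact hC _⟩
  have hlim : Tendsto f atTop (nhds (⨅ k, f k)) :=
    tendsto_atTop_ciInf hanti hbdd'
  have hlim' : Tendsto (fun k => f (k + 1)) atTop (nhds (⨅ k, f k)) :=
    hlim.comp (tendsto_add_atTop_nat 1)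
  have hdiff0 : Tendsto (fun k => f k - f (k + 1)) atTop (nhds 0) := by
    have := hlim.sub hlim'
    simpa using this
  have hτd : Tendsto (fun k => τ k * ‖d k‖ ^ 2) atTop (nhds 0) := by
    have heq : (fun k => τ k * ‖d k‖ ^ 2) = fun k => f k - f (k + 1) := by
      funext k
      have := key k
      linarith
    rw [heq]; exact hdiff0
  have hub : ∀ k, ‖d k‖ ^ 2 ≤ c⁻¹ * (τ k * ‖d k‖ ^ 2) := by
    intro k
    have h1 : c * ‖d k‖ ^ 2 ≤ τ k * ‖d k‖ ^ 2 :=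
      mul_le_mul_of_nonneg_right (hcM k).1 (sq_nonneg _)
    calc ‖d k‖ ^ 2 = c⁻¹ * (c * ‖d k‖ ^ 2) := by field_simp
      _ ≤ c⁻¹ * (τ k * ‖d k‖ ^ 2) :=
          mul_le_mul_of_nonneg_left h1 (inv_nonneg.mpr hc.le)
  have hsq : Tendsto (fun k => ‖d k‖ ^ 2) atTop (nhds 0) := by
    refine squeeze_zero (fun k => sq_nonneg _) hub ?_
    simpa using hτd.const_mul c⁻¹
  have hnorm : Tendsto (fun k => ‖d k‖) atTop (nhds 0) := by
    have := hsq.sqrt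
    simpa [Real.sqrt_sq (norm_nonneg _)] using this
  have hdto0 : Tendsto d atTop (nhds 0) :=
    tendsto_zero_iff_norm_tendsto_zero.mpr hnorm
  constructor
  · rw [tendsto_zero_iff_norm_tendsto_zero]
    have hub2 : ∀ k, ‖x (k + 1) - x k‖ ≤ M * ‖d k‖ := by
      intro k
      rw [hdiff k, norm_neg, norm_smul, Real.norm_eq_abs,
        abs_of_pos (hτpos k)]
      exact mul_le_mul_of_nonneg_right (hcM k).2 (norm_nonneg _)
    refine squeeze_zero (fun k => norm_nonneg _) hub2 ?_
    simpa using hnorm.const_mul M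
  · exact hdto0
end

section
/- Let V : ℝⁿ → ℝ be continuously differentiable, bounded below and coercive, and (x_n) generated by the discrete gradient method with step sizes τ_n ∈ [c, M], 0 < c ≤ M < ∞. Then lim_{n→∞} ∇V(x_n) = 0. -/
/-!
Each step of the discrete gradient method dissipates energy exactly:
`V x_{k+1} = V x_k - τ_k ‖∇̄V(x_k, x_{k+1})‖²`. Since `V` is bounded below, `V x_k` converges,
so the dissipated energies tend to `0`, hence `∇̄V(x_k, x_{k+1}) → 0` (as `τ_k ≥ c`) and
consecutive iterates merge (as `τ_k ≤ M`). The iterates stay in the sublevel set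
`{V ≤ V x_0}`, which is compact by coercivity, and there `∇̄V` is uniformly continuous; hence
`∇V(x_k) = ∇̄V(x_k, x_k)` is close to `∇̄V(x_k, x_{k+1})` and tends to `0` as well.
-/

open scoped RealInnerProductSpace
open Filter Topology Set
open scoped Uniformity

section SublevelSet

variable {E : Type*} [SeminormedAddCommGroup E] {V : E → ℝ}

lemma isBounded_sublevel_of_coercive
    (hV : ∀ u : ℕ → E, Tendsto (fun k => ‖u k‖) atTop atTop → Tendsto (fun k => V (u k)) atTop atTop)
    (a : ℝ) : Bornology.IsBounded {u | V u ≤ a} := by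
  by_contra hb
  rw [isBounded_iff_forall_norm_le] at hb
  push Not at hb
  choose u hu hu_norm using fun k : ℕ => hb k
  have h_norm : Tendsto (fun k => ‖u k‖) atTop atTop :=
    tendsto_atTop_mono (fun k => (hu_norm k).le) tendsto_natCast_atTop_atTop
  obtain ⟨k, hk⟩ := ((hV u h_norm).eventually_gt_atTop a).exists
  exact (hu k).not_gt hk

lemma isCompact_sublevel_of_coercive [ProperSpace E] (hcont : Continuous V)
    (hV : ∀ u : ℕ → E, Tendsto (fun k => ‖u k‖) atTop atTop → Tendsto (fun k => V (u k)) atTop atTop)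
    (a : ℝ) : IsCompact {u | V u ≤ a} :=
  Metric.isCompact_of_isClosed_isBounded (isClosed_le hcont continuous_const)
    (isBounded_sublevel_of_coercive hV a)

end SublevelSet

lemma UniformContinuousOn.tendsto_dist_comp_zero {α β ι : Type*} [PseudoMetricSpace α]
    [PseudoMetricSpace β] {f : α → β} {s : Set α} (hf : UniformContinuousOn f s) {l : Filter ι}
    {p q : ι → α} (hp : ∀ i, p i ∈ s) (hq : ∀ i, q i ∈ s)
    (hpq : Tendsto (fun i => dist (p i) (q i)) l (𝓝 0)) :
    Tendsto (fun i => dist (f (p i)) (f (q i))) l (𝓝 0) := by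
  have h_unif : Tendsto (fun i => (p i, q i)) l (𝓤 α ⊓ 𝓟 (s ×ˢ s)) :=
    tendsto_inf.2 ⟨tendsto_uniformity_iff_dist_tendsto_zero.2 hpq,
      tendsto_principal.2 (Eventually.of_forall fun i => ⟨hp i, hq i⟩)⟩
  exact tendsto_uniformity_iff_dist_tendsto_zero.1 (Tendsto.comp hf h_unif)

lemma Antitone.tendsto_sub_succ_zero {u : ℕ → ℝ} (hu : Antitone u) (hb : BddBelow (range u)) :
    Tendsto (fun k => u k - u (k + 1)) atTop (𝓝 0) := by
  have h_lim := tendsto_atTop_ciInf hu hb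
  simpa using h_lim.sub (h_lim.comp (tendsto_add_atTop_nat 1))

lemma tendsto_zero_of_mul_norm_sq_tendsto_zero {E ι : Type*} [SeminormedAddCommGroup E]
    {l : Filter ι} {d : ι → E} {τ : ι → ℝ} {c : ℝ} (hc : 0 < c) (hτ : ∀ i, c ≤ τ i)
    (h : Tendsto (fun i => τ i * ‖d i‖ ^ 2) l (𝓝 0)) : Tendsto d l (𝓝 0) := by
  have h_sq : Tendsto (fun i => ‖d i‖ ^ 2) l (𝓝 0) := by
    refine squeeze_zero (fun i => sq_nonneg _) (fun i => ?_) (by simpa using h.const_mul c⁻¹)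
    rw [le_inv_mul_iff₀ hc]
    exact mul_le_mul_of_nonneg_right (hτ i) (sq_nonneg _)
  rw [tendsto_zero_iff_norm_tendsto_zero]
  simpa using h_sq.sqrt

section NormedSpace

variable {E : Type*} [SeminormedAddCommGroup E] [NormedSpace ℝ E] {DG : E × E → E}
  {x : ℕ → E} {τ : ℕ → ℝ}

lemma norm_sub_of_discreteGradient_step {u u' : E} {t : ℝ} (ht : 0 ≤ t)
    (h : u' = u - t • DG (u, u')) : ‖u' - u‖ = t * ‖DG (u, u')‖ := by
  conv_lhs => rw [h]
  rw [sub_sub_cancel_left, norm_neg, norm_smul, Real.norm_of_nonneg ht]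

lemma tendsto_dist_discreteGradient_iterates_zero {M : ℝ} (hτ : ∀ k, 0 ≤ τ k ∧ τ k ≤ M)
    (hstep : ∀ k, x (k + 1) = x k - τ k • DG (x k, x (k + 1)))
    (hDG_lim : Tendsto (fun k => DG (x k, x (k + 1))) atTop (𝓝 0)) :
    Tendsto (fun k => dist (x k) (x (k + 1))) atTop (𝓝 0) := by
  refine squeeze_zero (fun k => dist_nonneg) (fun k => ?_)
    ((hDG_lim.norm.const_mul M).trans_eq (by simp))
  rw [dist_comm, dist_eq_norm, norm_sub_of_discreteGradient_step (hτ k).1 (hstep k)]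
  exact mul_le_mul_of_nonneg_right (hτ k).2 (norm_nonneg _)

end NormedSpace

section InnerProductSpace

variable {E : Type*} [NormedAddCommGroup E] [InnerProductSpace ℝ E] {V : E → ℝ}
  {DG : E × E → E} {x : ℕ → E} {τ : ℕ → ℝ}

lemma energy_eq_of_discreteGradient_step (hDG : ∀ u u', ⟪DG (u, u'), u' - u⟫ = V u' - V u)
    {u u' : E} {t : ℝ} (h : u' = u - t • DG (u, u')) :
    V u' = V u - t * ‖DG (u, u')‖ ^ 2 := by
  have h_diff : u' - u = -(t • DG (u, u')) := by
    conv_lhs => rw [h]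
    abel
  have := hDG u u'
  rw [h_diff, inner_neg_right, real_inner_smul_right, real_inner_self_eq_norm_sq] at this
  linarith

lemma antitone_of_discreteGradient_iterates (hDG : ∀ u u', ⟪DG (u, u'), u' - u⟫ = V u' - V u)
    (hτ : ∀ k, 0 ≤ τ k) (hstep : ∀ k, x (k + 1) = x k - τ k • DG (x k, x (k + 1))) :
    Antitone (fun k => V (x k)) :=
  antitone_nat_of_succ_le fun k => by
    rw [energy_eq_of_discreteGradient_step hDG (hstep k)]
    exact sub_le_self _ (mul_nonneg (hτ k) (sq_nonneg _))

lemma tendsto_discreteGradient_iterates_zero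
    (hDG : ∀ u u', ⟪DG (u, u'), u' - u⟫ = V u' - V u) (hbdd : BddBelow (range fun k => V (x k)))
    {c : ℝ} (hc : 0 < c) (hτ : ∀ k, c ≤ τ k)
    (hstep : ∀ k, x (k + 1) = x k - τ k • DG (x k, x (k + 1))) :
    Tendsto (fun k => DG (x k, x (k + 1))) atTop (𝓝 0) := by
  have h_anti := antitone_of_discreteGradient_iterates hDG (fun k => hc.le.trans (hτ k)) hstep
  refine tendsto_zero_of_mul_norm_sq_tendsto_zero hc hτ <|
    (h_anti.tendsto_sub_succ_zero hbdd).congr fun k => ?_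
  rw [energy_eq_of_discreteGradient_step hDG (hstep k)]
  ring

end InnerProductSpace

theorem stmt_8 (n : ℕ) (V : EuclideanSpace ℝ (Fin n) → ℝ)
    (hV : ContDiff ℝ 1 V) (hbdd : ∃ C : ℝ, ∀ u, C ≤ V u)
    (hcoercive : ∀ u : ℕ → EuclideanSpace ℝ (Fin n),
      Tendsto (fun k => ‖u k‖) atTop atTop → Tendsto (fun k => V (u k)) atTop atTop)
    (DG : EuclideanSpace ℝ (Fin n) × EuclideanSpace ℝ (Fin n) → EuclideanSpace ℝ (Fin n))
    (hDGcont : Continuous DG)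
    (hDG1 : ∀ u u', ⟪DG (u, u'), u' - u⟫ = V u' - V u)
    (hDG2 : ∀ u, DG (u, u) = gradient V u)
    (x : ℕ → EuclideanSpace ℝ (Fin n)) (τ : ℕ → ℝ) (c M : ℝ)
    (hc : 0 < c) (hcM : ∀ k, c ≤ τ k ∧ τ k ≤ M)
    (hstep : ∀ k, x (k + 1) = x k - τ k • DG (x k, x (k + 1))) :
    Tendsto (fun k => gradient V (x k)) atTop (nhds 0) := by
  have hτ k : 0 ≤ τ k ∧ τ k ≤ M := ⟨hc.le.trans (hcM k).1, (hcM k).2⟩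
  have h_anti := antitone_of_discreteGradient_iterates hDG1 (fun k => (hτ k).1) hstep
  obtain ⟨C, hC⟩ := hbdd
  have h_lim := tendsto_discreteGradient_iterates_zero hDG1
    ⟨C, forall_mem_range.2 fun k => hC _⟩ hc (fun k => (hcM k).1) hstep
  have h_gap := tendsto_dist_discreteGradient_iterates_zero hτ hstep h_lim
  set K := {u | V u ≤ V (x 0)}
  have hxK k : x k ∈ K := h_anti (Nat.zero_le k)
  have hK : IsCompact K := isCompact_sublevel_of_coercive hV.continuous hcoercive _
  have h_unif : UniformContinuousOn DG (K ×ˢ K) :=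
    (hK.prod hK).uniformContinuousOn_of_continuous hDGcont.continuousOn
  have h_close : Tendsto (fun k => dist (DG (x k, x k)) (DG (x k, x (k + 1)))) atTop (𝓝 0) :=
    h_unif.tendsto_dist_comp_zero (fun k => ⟨hxK k, hxK k⟩) (fun k => ⟨hxK k, hxK (k + 1)⟩)
      (by simpa [Prod.dist_eq] using h_gap)
  have h_diff : Tendsto (fun k => DG (x k, x k) - DG (x k, x (k + 1))) atTop (𝓝 0) :=
    tendsto_zero_iff_norm_tendsto_zero.2 (by simpa only [dist_eq_norm] using h_close)
  simpa [← hDG2] using h_diff.add h_lim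
end

section
/- Let V : ℝⁿ → ℝ be continuously differentiable, bounded below and coercive, and let (x_n) be generated by the discrete gradient method with step sizes in [c, M], 0 < c ≤ M < ∞. Then the sequence (x_n) has at least one accumulation point, and every accumulation point x* satisfies ∇V(x*) = 0. -/
open scoped RealInnerProductSpace
open Filter
open scoped Topology

theorem stmt_10 (n : ℕ) (V : EuclideanSpace ℝ (Fin n) → ℝ)
    (hV : ContDiff ℝ 1 V) (hbdd : ∃ C : ℝ, ∀ u, C ≤ V u)
    (hcoercive : ∀ u : ℕ → EuclideanSpace ℝ (Fin n),
      Tendsto (fun k => ‖u k‖) atTop atTop → Tendsto (fun k => V (u k)) atTop atTop)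
    (DG : EuclideanSpace ℝ (Fin n) × EuclideanSpace ℝ (Fin n) → EuclideanSpace ℝ (Fin n))
    (hDGcont : Continuous DG)
    (hDG1 : ∀ u u', ⟪DG (u, u'), u' - u⟫ = V u' - V u)
    (hDG2 : ∀ u, DG (u, u) = gradient V u)
    (x : ℕ → EuclideanSpace ℝ (Fin n)) (τ : ℕ → ℝ) (c M : ℝ)
    (hc : 0 < c) (hcM : ∀ k, c ≤ τ k ∧ τ k ≤ M)
    (hstep : ∀ k, x (k + 1) = x k - τ k • DG (x k, x (k + 1))) :
    (∃ xstar, MapClusterPt xstar atTop x) ∧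
    ∀ xstar, MapClusterPt xstar atTop x → gradient V xstar = 0 := by
  obtain ⟨C, hC⟩ := hbdd
  set d : ℕ → EuclideanSpace ℝ (Fin n) := fun k => DG (x k, x (k + 1)) with hd
  have hτpos : ∀ k, 0 < τ k := fun k => hc.trans_le (hcM k).1
  have hdiff : ∀ k, x (k + 1) - x k = -(τ k • d k) := by
    intro k
    rw [hstep k]
    abel
  have hkey : ∀ k, V (x k) - V (x (k + 1)) = τ k * ‖d k‖ ^ 2 := by
    intro k
    have h1 := hDG1 (x k) (x (k + 1))
    rw [hdiff k, inner_neg_right, real_inner_smul_right,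
      real_inner_self_eq_norm_sq] at h1
    linarith
  have hanti : Antitone fun k => V (x k) := by
    refine antitone_nat_of_succ_le fun k => ?_
    have := hkey k
    nlinarith [mul_nonneg (hτpos k).le (sq_nonneg ‖d k‖)]
  -- V (x k) converges
  have hVtend : Tendsto (fun k => V (x k)) atTop (𝓝 (⨅ k, V (x k))) :=
    tendsto_atTop_ciInf hanti ⟨C, fun v ⟨k, hk⟩ => hk ▸ hC (x k)⟩
  have hVtend' : Tendsto (fun k => V (x (k + 1))) atTop (𝓝 (⨅ k, V (x k))) :=
    hVtend.comp (tendsto_add_atTop_nat 1)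
  have hgap : Tendsto (fun k => V (x k) - V (x (k + 1))) atTop (𝓝 0) := by
    simpa using hVtend.sub hVtend'
  -- ‖d k‖ ^ 2 → 0
  have hsq0 : Tendsto (fun k => ‖d k‖ ^ 2) atTop (𝓝 0) := by
    refine squeeze_zero (g := fun k => (V (x k) - V (x (k + 1))) / c) (fun k => sq_nonneg _) (fun k => ?_) ?_
    · show ‖d k‖ ^ 2 ≤ (V (x k) - V (x (k + 1))) / c
      rw [hkey k, le_div_iff₀ hc]
      have := (hcM k).1
      nlinarith [sq_nonneg ‖d k‖]
    · simpa using hgap.div_const c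
  have hdnorm0 : Tendsto (fun k => ‖d k‖) atTop (𝓝 0) := by
    have := (Real.continuous_sqrt.tendsto 0).comp hsq0
    simpa [Function.comp_def, Real.sqrt_sq (norm_nonneg _)] using this
  have hd0 : Tendsto d atTop (𝓝 0) := tendsto_zero_iff_norm_tendsto_zero.mpr hdnorm0
  -- steps go to zero
  have hstep0 : Tendsto (fun k => x (k + 1) - x k) atTop (𝓝 0) := by
    rw [tendsto_zero_iff_norm_tendsto_zero]
    refine squeeze_zero (g := fun k => M * ‖d k‖) (fun k => norm_nonneg _) (fun k => ?_) ?_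
    · show ‖x (k + 1) - x k‖ ≤ M * ‖d k‖
      rw [hdiff k, norm_neg, norm_smul, Real.norm_eq_abs, abs_of_pos (hτpos k)]
      exact mul_le_mul_of_nonneg_right (hcM k).2 (norm_nonneg _)
    · simpa using hdnorm0.const_mul M
  -- boundedness
  have hbound : ∃ R : ℝ, ∀ k, x k ∈ Metric.closedBall (0 : EuclideanSpace ℝ (Fin n)) R := by
    by_contra h
    push_neg at h
    simp only [Metric.mem_closedBall, dist_zero_right, not_le] at h
    choose f hf using h
    have htend : Tendsto (fun m : ℕ => ‖x (f m)‖) atTop atTop :=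
      tendsto_atTop_mono (fun m => (hf (m : ℝ)).le)
        tendsto_natCast_atTop_atTop
    have := hcoercive (fun m => x (f m)) htend
    obtain ⟨m, hm⟩ := (this.eventually (eventually_gt_atTop (V (x 0)))).exists
    exact absurd (hanti (Nat.zero_le (f m))) (not_le.mpr hm)
  obtain ⟨R, hR⟩ := hbound
  constructor
  · obtain ⟨a, -, φ, hφ, hlim⟩ :=
      tendsto_subseq_of_bounded Metric.isBounded_closedBall hR
    exact ⟨a, MapClusterPt.of_comp hφ.tendsto_atTop hlim.mapClusterPt⟩
  · intro xstar hcl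
    obtain ⟨φ, hφ, hlim⟩ := TopologicalSpace.FirstCountableTopology.tendsto_subseq hcl
    have hlim' : Tendsto (fun k => x (φ k + 1)) atTop (𝓝 xstar) := by
      have h1 : Tendsto (fun k => x (φ k + 1) - x (φ k)) atTop (𝓝 0) :=
        hstep0.comp hφ.tendsto_atTop
      have := h1.add hlim
      simpa using this
    have h2 : Tendsto (fun k => DG (x (φ k), x (φ k + 1))) atTop (𝓝 (DG (xstar, xstar))) :=
      (hDGcont.tendsto _).comp (hlim.prodMk_nhds hlim')
    have h3 : Tendsto (fun k => DG (x (φ k), x (φ k + 1))) atTop (𝓝 0) :=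
      hd0.comp hφ.tendsto_atTop
    have := tendsto_nhds_unique h2 h3
    rw [hDG2 xstar] at this
    exact this
end

section
/- Let V : ℝⁿ → ℝ be continuously differentiable, bounded below, coercive and strictly convex, and (x_n) generated by the discrete gradient method with step sizes in [c, M]. Then (x_n) converges to the unique global minimizer of V. -/
/-!
The discrete gradient identity turns each step into an exact energy decrease
`V xₖ₊₁ = V xₖ - τₖ ‖∇̄V(xₖ, xₖ₊₁)‖²`. Hence `V xₖ` is non-increasing, coercivity keeps the
iterates in a compact set, and since `τₖ ≥ c` the convergence of the energy forces the discrete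
gradients, and with `τₖ ≤ M` the increments `xₖ₊₁ - xₖ`, to tend to zero. By continuity of `∇̄V`
and `∇̄V(u, u) = ∇V u`, every cluster point is a critical point of the convex function `V`, hence
a global minimizer; strict convexity makes the minimizer unique, so the sequence, confined to a
compact set with a single cluster point, converges to it.
-/

open scoped RealInnerProductSpace
open Filter Topology Set

lemma ConvexOn.isMinOn_of_hasFDerivAt_eq_zero {E : Type*} [NormedAddCommGroup E]
    [NormedSpace ℝ E] {f : E → ℝ} {a : E} (hf : ConvexOn ℝ univ f)
    (hfa : HasFDerivAt f (0 : E →L[ℝ] ℝ) a) : IsMinOn f univ a := by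
  intro w _
  set γ : ℝ →ᵃ[ℝ] E := AffineMap.lineMap a w
  have hline : ConvexOn ℝ univ (f ∘ γ) := hf.comp_affineMap γ
  have hderiv : HasDerivAt (f ∘ γ) 0 0 := by
    have hfγ : HasFDerivAt f (0 : E →L[ℝ] ℝ) (γ 0) := by simpa [γ] using hfa
    simpa using hfγ.comp_hasDerivAt (0 : ℝ) AffineMap.hasDerivAt_lineMap
  have := hline.le_slope_of_hasDerivAt (mem_univ 0) (mem_univ 1) one_pos hderiv
  simpa [slope_def_field, γ] using this

lemma ConvexOn.isMinOn_of_gradient_eq_zero {E : Type*} [NormedAddCommGroup E]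
    [InnerProductSpace ℝ E] [CompleteSpace E] {f : E → ℝ} {a : E} (hf : ConvexOn ℝ univ f)
    (hfa : DifferentiableAt ℝ f a) (hgrad : gradient f a = 0) : IsMinOn f univ a := by
  refine hf.isMinOn_of_hasFDerivAt_eq_zero ?_
  simpa [hgrad] using hfa.hasGradientAt.hasFDerivAt

lemma isBounded_range_of_coercive {E : Type*} [NormedAddCommGroup E] {V : E → ℝ}
    (hcoercive : ∀ u : ℕ → E, Tendsto (fun k => ‖u k‖) atTop atTop →
      Tendsto (fun k => V (u k)) atTop atTop)
    {x : ℕ → E} {C : ℝ} (hC : ∀ k, V (x k) ≤ C) : Bornology.IsBounded (range x) := by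
  simp only [isBounded_iff_forall_norm_le, forall_mem_range]
  by_contra! hunbdd
  choose k hk using fun j : ℕ => hunbdd j
  have hnorm : Tendsto (fun j => ‖x (k j)‖) atTop atTop :=
    tendsto_atTop_mono (fun j => (hk j).le) tendsto_natCast_atTop_atTop
  obtain ⟨j, hj⟩ := ((hcoercive _ hnorm).eventually_gt_atTop C).exists
  exact (hC (k j)).not_gt hj

section DiscreteGradient

variable {E : Type*} [NormedAddCommGroup E] [InnerProductSpace ℝ E]
  {V : E → ℝ} {DG : E × E → E} {x : ℕ → E} {τ : ℕ → ℝ}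

lemma energy_succ_of_discreteGradient (hDG : ∀ u u', ⟪DG (u, u'), u' - u⟫ = V u' - V u)
    (hstep : ∀ k, x (k + 1) = x k - τ k • DG (x k, x (k + 1))) (k : ℕ) :
    V (x (k + 1)) = V (x k) - τ k * ‖DG (x k, x (k + 1))‖ ^ 2 := by
  have hincr : x (k + 1) - x k = -(τ k • DG (x k, x (k + 1))) := by
    nth_rewrite 1 [hstep k]
    exact sub_sub_cancel_left _ _
  have hdecrease := hDG (x k) (x (k + 1))
  rw [hincr, inner_neg_right, real_inner_smul_right, real_inner_self_eq_norm_sq] at hdecrease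
  linarith

lemma antitone_of_discreteGradient (hDG : ∀ u u', ⟪DG (u, u'), u' - u⟫ = V u' - V u)
    (hτ : ∀ k, 0 ≤ τ k) (hstep : ∀ k, x (k + 1) = x k - τ k • DG (x k, x (k + 1))) :
    Antitone fun k => V (x k) :=
  antitone_nat_of_succ_le fun k => by
    rw [energy_succ_of_discreteGradient hDG hstep k]
    exact sub_le_self _ (mul_nonneg (hτ k) (sq_nonneg _))

lemma tendsto_discreteGradient_zero (hDG : ∀ u u', ⟪DG (u, u'), u' - u⟫ = V u' - V u)
    {c : ℝ} (hc : 0 < c) (hτ : ∀ k, c ≤ τ k)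
    (hstep : ∀ k, x (k + 1) = x k - τ k • DG (x k, x (k + 1)))
    (hbdd : BddBelow (range fun k => V (x k))) :
    Tendsto (fun k => DG (x k, x (k + 1))) atTop (𝓝 0) := by
  have hanti := antitone_of_discreteGradient hDG (fun k => hc.le.trans (hτ k)) hstep
  have hlim := tendsto_atTop_ciInf hanti hbdd
  have hdrop : Tendsto (fun k => (V (x k) - V (x (k + 1))) / c) atTop (𝓝 0) := by
    simpa using (hlim.sub (hlim.comp (tendsto_add_atTop_nat 1))).div_const c
  have hsq : Tendsto (fun k => ‖DG (x k, x (k + 1))‖ ^ 2) atTop (𝓝 0) := by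
    refine squeeze_zero (fun k => sq_nonneg _) (fun k => ?_) hdrop
    rw [energy_succ_of_discreteGradient hDG hstep k, sub_sub_cancel, le_div_iff₀ hc, mul_comm]
    exact mul_le_mul_of_nonneg_right (hτ k) (sq_nonneg _)
  rw [tendsto_zero_iff_norm_tendsto_zero]
  simpa using hsq.sqrt

lemma tendsto_sub_succ_zero_of_discreteGradient {M : ℝ} (hτ : ∀ k, 0 ≤ τ k ∧ τ k ≤ M)
    (hstep : ∀ k, x (k + 1) = x k - τ k • DG (x k, x (k + 1)))
    (hDG0 : Tendsto (fun k => DG (x k, x (k + 1))) atTop (𝓝 0)) :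
    Tendsto (fun k => x (k + 1) - x k) atTop (𝓝 0) := by
  refine squeeze_zero_norm (fun k => ?_) (by simpa using (tendsto_norm_zero.comp hDG0).const_mul M)
  nth_rewrite 1 [hstep k]
  rw [sub_sub_cancel_left, norm_neg, norm_smul, Real.norm_of_nonneg (hτ k).1]
  exact mul_le_mul_of_nonneg_right (hτ k).2 (norm_nonneg _)

lemma gradient_eq_zero_of_mapClusterPt [CompleteSpace E] (hDGcont : Continuous DG)
    (hDG2 : ∀ u, DG (u, u) = gradient V u)
    (hDG0 : Tendsto (fun k => DG (x k, x (k + 1))) atTop (𝓝 0))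
    (hincr : Tendsto (fun k => x (k + 1) - x k) atTop (𝓝 0)) {a : E}
    (ha : MapClusterPt a atTop x) : gradient V a = 0 := by
  obtain ⟨φ, hφ, hxφ⟩ := ha.tendsto_subseq
  have hxφ_succ : Tendsto (fun j => x (φ j + 1)) atTop (𝓝 a) := by
    simpa using hxφ.add (hincr.comp hφ.tendsto_atTop)
  rw [← hDG2]
  exact tendsto_nhds_unique ((hDGcont.tendsto (a, a)).comp (hxφ.prodMk_nhds hxφ_succ))
    (hDG0.comp hφ.tendsto_atTop)

end DiscreteGradient

theorem stmt_12_general (n : ℕ) (V : EuclideanSpace ℝ (Fin n) → ℝ)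
    (hV : ContDiff ℝ 1 V)
    (hcoercive : ∀ u : ℕ → EuclideanSpace ℝ (Fin n),
      Tendsto (fun k => ‖u k‖) atTop atTop → Tendsto (fun k => V (u k)) atTop atTop)
    (hconv : StrictConvexOn ℝ Set.univ V)
    (DG : EuclideanSpace ℝ (Fin n) × EuclideanSpace ℝ (Fin n) → EuclideanSpace ℝ (Fin n))
    (hDGcont : Continuous DG)
    (hDG1 : ∀ u u', ⟪DG (u, u'), u' - u⟫ = V u' - V u)
    (hDG2 : ∀ u, DG (u, u) = gradient V u)
    (x : ℕ → EuclideanSpace ℝ (Fin n)) (τ : ℕ → ℝ) (c M : ℝ)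
    (hc : 0 < c) (hcM : ∀ k, c ≤ τ k ∧ τ k ≤ M)
    (hstep : ∀ k, x (k + 1) = x k - τ k • DG (x k, x (k + 1))) :
    ∃ xstar, (∀ w, V xstar ≤ V w) ∧ Tendsto x atTop (nhds xstar) := by
  have hτ : ∀ k, 0 ≤ τ k ∧ τ k ≤ M := fun k => ⟨hc.le.trans (hcM k).1, (hcM k).2⟩
  have hanti := antitone_of_discreteGradient hDG1 (fun k => (hτ k).1) hstep
  let K := closure (range x)
  have hK : IsCompact K :=
    (isBounded_range_of_coercive hcoercive fun k => hanti k.zero_le).isCompact_closure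
  have hxK : ∀ k, x k ∈ K := fun k => subset_closure (mem_range_self k)
  have hVbdd : BddBelow (range fun k => V (x k)) :=
    (hK.bddBelow_image hV.continuous.continuousOn).mono
      (range_subset_iff.mpr fun k => mem_image_of_mem V (hxK k))
  have hDG0 := tendsto_discreteGradient_zero hDG1 hc (fun k => (hcM k).1) hstep hVbdd
  have hincr := tendsto_sub_succ_zero_of_discreteGradient hτ hstep hDG0
  have hmin : ∀ a, MapClusterPt a atTop x → IsMinOn V univ a := fun a ha =>
    hconv.convexOn.isMinOn_of_gradient_eq_zero (hV.differentiable one_ne_zero a)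
      (gradient_eq_zero_of_mapClusterPt hDGcont hDG2 hDG0 hincr ha)
  have hxK' : ∀ᶠ k in atTop, x k ∈ K := .of_forall hxK
  obtain ⟨a, -, ha⟩ := hK.exists_mapClusterPt (tendsto_principal.mpr hxK')
  refine ⟨a, fun w => hmin a ha (mem_univ w), hK.tendsto_nhds_of_unique_mapClusterPt hxK' ?_⟩
  exact fun b _ hb => hconv.eq_of_isMinOn (hmin b hb) (hmin a ha) trivial trivial

theorem stmt_12 (n : ℕ) (V : EuclideanSpace ℝ (Fin n) → ℝ)
    (hV : ContDiff ℝ 1 V) (hbdd : ∃ C : ℝ, ∀ u, C ≤ V u)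
    (hcoercive : ∀ u : ℕ → EuclideanSpace ℝ (Fin n),
      Tendsto (fun k => ‖u k‖) atTop atTop → Tendsto (fun k => V (u k)) atTop atTop)
    (hconv : StrictConvexOn ℝ Set.univ V)
    (DG : EuclideanSpace ℝ (Fin n) × EuclideanSpace ℝ (Fin n) → EuclideanSpace ℝ (Fin n))
    (hDGcont : Continuous DG)
    (hDG1 : ∀ u u', ⟪DG (u, u'), u' - u⟫ = V u' - V u)
    (hDG2 : ∀ u, DG (u, u) = gradient V u)
    (x : ℕ → EuclideanSpace ℝ (Fin n)) (τ : ℕ → ℝ) (c M : ℝ)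
    (hc : 0 < c) (hcM : ∀ k, c ≤ τ k ∧ τ k ≤ M)
    (hstep : ∀ k, x (k + 1) = x k - τ k • DG (x k, x (k + 1))) :
    ∃ xstar, (∀ w, V xstar ≤ V w) ∧ Tendsto x atTop (nhds xstar) :=
  stmt_12_general n V hV hcoercive hconv DG hDGcont hDG1 hDG2 x τ c M hc hcM hstep
end
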